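/- Conditioning reduces the deception exponent: for any joint full-support distribution P on X × Z, E_Z(D) ≤ E(D), i.e., max over joint Q on X×Z of [R_{X|Z}(D,Q) − D(Q‖P_{XZ})] ≤ max over Q on X of [R(D,Q) − D(Q‖P_X)], where P_X is the X-marginal of P. -/

import Mathlib

/-!
For a joint `Q` on `X × Z`, a test channel `W(y|x)` that ignores `z` is admissible for
`R_{X|Z}(D,Q)` exactly when it is admissible for `R(D,Q_X)`, and for it
`I(X;Y) - I(X;Y|Z) = I(Z;Y) ≥ 0`; hence `R_{X|Z}(D,Q) ≤ R(D,Q_X)`. The log-sum inequality gives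
`D(Q_X‖P_X) ≤ D(Q‖P)`, so each value on the left is dominated by the value at `Q_X` on the right,
and the right-hand supremum is finite because `R(D,Q) ≤ H(Q) ≤ |X|`.
-/

open scoped BigOperators

/-- A probability distribution on a finite alphabet. -/
def IsProbDist {X : Type*} [Fintype X] (p : X → ℝ) : Prop :=
  (∀ x, 0 ≤ p x) ∧ ∑ x, p x = 1

/-- Relative entropy (KL divergence), natural log, convention 0 log 0 = 0. -/
noncomputable def klDiv {X : Type*} [Fintype X] (Q P : X → ℝ) : ℝ :=
  ∑ x, Q x * Real.log (Q x / P x)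

/-- Mutual information of the joint law Q(x)W(y|x). -/
noncomputable def mutualInfo {X Y : Type*} [Fintype X] [Fintype Y]
    (Q : X → ℝ) (W : X → Y → ℝ) : ℝ :=
  ∑ x, ∑ y, Q x * W x y * Real.log (W x y / (∑ x', Q x' * W x' y))

/-- Rate-distortion function `R(D,Q)`. -/
noncomputable def rateDistortion {X Y : Type*} [Fintype X] [Fintype Y]
    (d : X → Y → ℝ) (D : ℝ) (Q : X → ℝ) : ℝ :=
  sInf {r | ∃ W : X → Y → ℝ, (∀ x y, 0 ≤ W x y) ∧ (∀ x, ∑ y, W x y = 1) ∧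
    (∑ x, ∑ y, Q x * W x y * d x y) ≤ D ∧ r = mutualInfo Q W}

/-- Per-symbol mean distortion between two length-n sequences. -/
noncomputable def meanDist {X Y : Type*} (d : X → Y → ℝ) {n : ℕ}
    (x : Fin n → X) (y : Fin n → Y) : ℝ :=
  (1 / (n : ℝ)) * ∑ i, d (x i) (y i)

/-- Empirical distribution (type) of a sequence. -/
noncomputable def empDist {X : Type*} [Fintype X] [DecidableEq X] {n : ℕ}
    (x : Fin n → X) (a : X) : ℝ :=
  ((Finset.univ.filter (fun i => x i = a)).card : ℝ) / n

/-- Counting function of an adversarial strategy list: 1-based index of the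
first guess within mean distortion `D` of `x` (0 if none exists). -/
noncomputable def countG {X Y : Type*} (d : X → Y → ℝ) (D : ℝ) {n : ℕ}
    (S : List (Fin n → Y)) (x : Fin n → X) : ℕ :=
  sInf {j : ℕ | ∃ y ∈ S.take j, meanDist d x y ≤ D}

/-- n-fold product (i.i.d.) distribution. -/
noncomputable def prodDist {X : Type*} (P : X → ℝ) {n : ℕ} (x : Fin n → X) : ℝ :=
  ∏ i, P (x i)

/-- Conditional mutual information `I(X;Y|Z)` under the joint law `Q(x,z)W(y|x,z)`. -/
noncomputable def condMutualInfo {X Z Y : Type*} [Fintype X] [Fintype Z] [Fintype Y]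
    (Q : X → Z → ℝ) (W : X → Z → Y → ℝ) : ℝ :=
  ∑ x, ∑ z, ∑ y, Q x z * W x z y *
    Real.log (W x z y * (∑ x', Q x' z) / (∑ x', Q x' z * W x' z y))

/-- Conditional rate-distortion function `R_{X|Z}(D,Q)` (side information at both
encoder and decoder). -/
noncomputable def condRateDistortion {X Z Y : Type*} [Fintype X] [Fintype Z] [Fintype Y]
    (d : X → Y → ℝ) (D : ℝ) (Q : X → Z → ℝ) : ℝ :=
  sInf {r | ∃ W : X → Z → Y → ℝ, (∀ x z y, 0 ≤ W x z y) ∧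
    (∀ x z, ∑ y, W x z y = 1) ∧
    (∑ x, ∑ z, ∑ y, Q x z * W x z y * d x y) ≤ D ∧
    r = condMutualInfo Q W}

/-- A joint probability distribution on `X × Z`. -/
def IsJointProbDist {X Z : Type*} [Fintype X] [Fintype Z] (p : X → Z → ℝ) : Prop :=
  (∀ x z, 0 ≤ p x z) ∧ ∑ x, ∑ z, p x z = 1

/-- Relative entropy between joint distributions on `X × Z`. -/
noncomputable def klDiv2 {X Z : Type*} [Fintype X] [Fintype Z]
    (Q P : X → Z → ℝ) : ℝ :=
  ∑ x, ∑ z, Q x z * Real.log (Q x z / P x z)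

/-- Joint empirical distribution of a pair of sequences. -/
noncomputable def jointEmpDist {X Z : Type*} [DecidableEq X] [DecidableEq Z] {n : ℕ}
    (x : Fin n → X) (z : Fin n → Z) (a : X) (b : Z) : ℝ :=
  ((Finset.univ.filter (fun i : Fin n => x i = a ∧ z i = b)).card : ℝ) / n

open Finset Real

lemma sub_le_mul_log_div {a b : ℝ} (ha : 0 ≤ a) (hb : 0 ≤ b) (hab : 0 < a → 0 < b) :
    a - b ≤ a * log (a / b) := by
  rcases ha.eq_or_lt with rfl | ha
  · simpa using hb
  have hb := hab ha
  calc a - b = b * (a / b - 1) := by field_simp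
    _ ≤ b * (a / b * log (a / b)) := by
        gcongr; exact self_sub_one_le_mul_log (by positivity)
    _ = a * log (a / b) := by field_simp

section Gibbs

variable {ι : Type*} (s : Finset ι) {a b : ι → ℝ}

theorem Finset.sum_mul_log_div_nonneg (ha : ∀ i ∈ s, 0 ≤ a i) (hb : ∀ i ∈ s, 0 ≤ b i)
    (hab : ∀ i ∈ s, 0 < a i → 0 < b i) (hsum : ∑ i ∈ s, b i ≤ ∑ i ∈ s, a i) :
    0 ≤ ∑ i ∈ s, a i * log (a i / b i) :=
  calc 0 ≤ ∑ i ∈ s, (a i - b i) := by rw [sum_sub_distrib]; linarith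
    _ ≤ _ := sum_le_sum fun i hi => sub_le_mul_log_div (ha i hi) (hb i hi) (hab i hi)

/-- The log-sum inequality, obtained from Gibbs' inequality for `a` against `b` rescaled to the
mass of `a`. -/
theorem Finset.sum_mul_log_div_sum_le (ha : ∀ i ∈ s, 0 ≤ a i) (hb : ∀ i ∈ s, 0 < b i) :
    (∑ i ∈ s, a i) * log ((∑ i ∈ s, a i) / ∑ i ∈ s, b i) ≤
      ∑ i ∈ s, a i * log (a i / b i) := by
  set c := (∑ i ∈ s, a i) / ∑ i ∈ s, b i
  have hc0 : 0 ≤ c := div_nonneg (sum_nonneg ha) (sum_nonneg fun i hi => (hb i hi).le)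
  have hc : ∀ i ∈ s, 0 < a i → 0 < c := fun i hi hai =>
    div_pos (hai.trans_le (single_le_sum ha hi)) (sum_pos hb ⟨i, hi⟩)
  have hsplit : ∀ i ∈ s, a i * log (a i / (b i * c)) = a i * log (a i / b i) - a i * log c := by
    intro i hi
    rcases (ha i hi).eq_or_lt with hai | hai
    · simp [← hai]
    · rw [← div_div, log_div (div_pos hai (hb i hi)).ne' (hc i hi hai).ne']; ring
  have hmass : ∑ i ∈ s, b i * c ≤ ∑ i ∈ s, a i := by
    rcases s.eq_empty_or_nonempty with rfl | hs
    · simp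
    · rw [← sum_mul, mul_div_cancel₀ _ (sum_pos hb hs).ne']
  have hgibbs := s.sum_mul_log_div_nonneg (b := fun i => b i * c) ha
    (fun i hi => mul_nonneg (hb i hi).le hc0) (fun i hi hai => mul_pos (hb i hi) (hc i hi hai))
    hmass
  rw [sum_congr rfl hsplit, sum_sub_distrib, ← sum_mul] at hgibbs
  linarith

end Gibbs

lemma mul_le_sum_mul {X Y : Type*} [Fintype X] {Q : X → ℝ} {W : X → Y → ℝ}
    (hQ0 : ∀ x, 0 ≤ Q x) (hW0 : ∀ x y, 0 ≤ W x y) (x : X) (y : Y) :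
    Q x * W x y ≤ ∑ x', Q x' * W x' y :=
  single_le_sum (f := fun x' => Q x' * W x' y) (fun x' _ => mul_nonneg (hQ0 x') (hW0 x' y))
    (mem_univ x)

section Channels

variable {X Z Y : Type*} [Fintype X] [Fintype Z] [Fintype Y]

lemma IsJointProbDist.marginal {Q : X → Z → ℝ} (hQ : IsJointProbDist Q) :
    IsProbDist fun a => ∑ b, Q a b :=
  ⟨fun a => sum_nonneg fun b _ => hQ.1 a b, hQ.2⟩

lemma sum_sum_mul_of_sum_eq_one (Q : X → ℝ) {W : X → Y → ℝ} (hW1 : ∀ x, ∑ y, W x y = 1) :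
    ∑ y, ∑ x, Q x * W x y = ∑ x, Q x := by
  rw [sum_comm]; simp only [← mul_sum, hW1, mul_one]

lemma klDiv_nonneg {Q P : X → ℝ} (hQ : IsProbDist Q) (hP : IsProbDist P)
    (hQP : ∀ a, 0 < Q a → 0 < P a) : 0 ≤ klDiv Q P :=
  univ.sum_mul_log_div_nonneg (fun a _ => hQ.1 a) (fun a _ => hP.1 a) (fun a _ => hQP a)
    (by rw [hQ.2, hP.2])

lemma klDiv_marginal_le_klDiv2 {Q P : X → Z → ℝ} (hQ : ∀ x z, 0 ≤ Q x z)
    (hP : ∀ x z, 0 < P x z) :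
    klDiv (fun a => ∑ b, Q a b) (fun a => ∑ b, P a b) ≤ klDiv2 Q P :=
  sum_le_sum fun x _ => univ.sum_mul_log_div_sum_le (fun z _ => hQ x z) (fun z _ => hP x z)

section MutualInfo

variable {Q : X → ℝ} {W : X → Y → ℝ}

lemma mutualInfo_eq_sum_mul_sum :
    mutualInfo Q W = ∑ x, Q x * ∑ y, W x y * log (W x y / ∑ x', Q x' * W x' y) := by
  simp only [mutualInfo, mul_sum, mul_assoc]

lemma mutualInfo_nonneg (hQ : IsProbDist Q) (hW0 : ∀ x y, 0 ≤ W x y)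
    (hW1 : ∀ x, ∑ y, W x y = 1) : 0 ≤ mutualInfo Q W := by
  rw [mutualInfo_eq_sum_mul_sum]
  refine sum_nonneg fun x _ => ?_
  rcases (hQ.1 x).eq_or_lt with hx | hx
  · simp [← hx]
  refine mul_nonneg hx.le (univ.sum_mul_log_div_nonneg (fun y _ => hW0 x y)
    (fun y _ => sum_nonneg fun x' _ => mul_nonneg (hQ.1 x') (hW0 x' y))
    (fun y _ hy => (mul_pos hx hy).trans_le (mul_le_sum_mul hQ.1 hW0 x y)) ?_)
  rw [sum_sum_mul_of_sum_eq_one Q hW1, hQ.2, hW1]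

/-- `I(X;Y) ≤ H(X)`: the output mass at `y` is at least `Q x * W x y`, so
`W x y / q y ≤ 1 / Q x`. -/
lemma mutualInfo_le_sum_negMulLog (hQ0 : ∀ x, 0 ≤ Q x) (hW0 : ∀ x y, 0 ≤ W x y)
    (hW1 : ∀ x, ∑ y, W x y = 1) : mutualInfo Q W ≤ ∑ x, negMulLog (Q x) := by
  rw [mutualInfo_eq_sum_mul_sum]
  refine sum_le_sum fun x _ => ?_
  rcases (hQ0 x).eq_or_lt with hx | hx
  · simp [← hx]
  have hlog : ∀ y, W x y * log (W x y / ∑ x', Q x' * W x' y) ≤ W x y * -log (Q x) := by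
    intro y
    rcases (hW0 x y).eq_or_lt with hy | hy
    · simp [← hy]
    have hle := mul_le_sum_mul hQ0 hW0 x y
    have hq := (mul_pos hx hy).trans_le hle
    have h := log_nonpos (by positivity)
      (div_le_one_of_le₀ hle hq.le : Q x * W x y / ∑ x', Q x' * W x' y ≤ 1)
    rw [mul_div_assoc, log_mul hx.ne' (div_pos hy hq).ne'] at h
    exact mul_le_mul_of_nonneg_left (by linarith) hy.le
  calc Q x * ∑ y, W x y * log (W x y / ∑ x', Q x' * W x' y)
      ≤ Q x * ∑ y, W x y * -log (Q x) :=
        mul_le_mul_of_nonneg_left (sum_le_sum fun y _ => hlog y) hx.le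
    _ = negMulLog (Q x) := by rw [← sum_mul, hW1, negMulLog]; ring

end MutualInfo

lemma condMutualInfo_nonneg {Q : X → Z → ℝ} {W : X → Z → Y → ℝ} (hQ0 : ∀ x z, 0 ≤ Q x z)
    (hW0 : ∀ x z y, 0 ≤ W x z y) (hW1 : ∀ x z, ∑ y, W x z y = 1) :
    0 ≤ condMutualInfo Q W := by
  refine sum_nonneg fun x _ => sum_nonneg fun z _ => ?_
  rcases (hQ0 x z).eq_or_lt with hxz | hxz
  · simp [← hxz]
  have hQz : 0 < ∑ x', Q x' z := hxz.trans_le (single_le_sum (fun x' _ => hQ0 x' z) (mem_univ x))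
  -- `r` is the output law given `z`, so each `(x, z)` row is a relative entropy.
  set r : Y → ℝ := fun y => (∑ x', Q x' z * W x' z y) / ∑ x', Q x' z
  have hrow : ∑ y, Q x z * W x z y *
        log (W x z y * (∑ x', Q x' z) / ∑ x', Q x' z * W x' z y) =
      Q x z * ∑ y, W x z y * log (W x z y / r y) := by
    simp only [r, mul_sum, mul_assoc, div_div_eq_mul_div]
  rw [hrow]
  refine mul_nonneg hxz.le (univ.sum_mul_log_div_nonneg (fun y _ => hW0 x z y)
    (fun y _ => div_nonneg (sum_nonneg fun x' _ => mul_nonneg (hQ0 x' z) (hW0 x' z y)) hQz.le)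
    (fun y _ hy => div_pos ((mul_pos hxz hy).trans_le
      (mul_le_sum_mul (fun x' => hQ0 x' z) (fun x' y' => hW0 x' z y') x y)) hQz) ?_)
  rw [← sum_div, sum_sum_mul_of_sum_eq_one _ (hW1 · z), div_self hQz.ne', hW1]

lemma log_div_sub_log_mul_div {w q s m : ℝ} (hw : 0 < w) (hq : 0 < q) (hs : 0 < s) (hm : 0 < m) :
    log (w / q) - log (w * s / m) = log (m / (s * q)) := by
  rw [← log_div (by positivity) (by positivity)]
  congr 1
  field_simp

/-- For a test channel ignoring `z`, `I(X;Y) - I(X;Y|Z) = I(Z;Y)`, a Gibbs sum over each `z`. -/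
theorem condMutualInfo_le_mutualInfo_marginal {Q : X → Z → ℝ} {W : X → Y → ℝ}
    (hQ : IsJointProbDist Q) (hW0 : ∀ x y, 0 ≤ W x y) (hW1 : ∀ x, ∑ y, W x y = 1) :
    condMutualInfo Q (fun x _ y => W x y) ≤ mutualInfo (fun a => ∑ b, Q a b) W := by
  obtain ⟨hQ0, hQ1⟩ := hQ
  set QX : X → ℝ := fun x => ∑ z, Q x z
  set Qz : Z → ℝ := fun z => ∑ x, Q x z
  set q : Y → ℝ := fun y => ∑ x, QX x * W x y
  set m : Z → Y → ℝ := fun z y => ∑ x, Q x z * W x y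
  have hQX0 : ∀ x, 0 ≤ QX x := fun x => sum_nonneg fun z _ => hQ0 x z
  have hm_le_q : ∀ z y, m z y ≤ q y := fun z y => sum_le_sum fun x _ =>
    mul_le_mul_of_nonneg_right (single_le_sum (fun z' _ => hQ0 x z') (mem_univ z)) (hW0 x y)
  have hm_le_Qz : ∀ z y, m z y ≤ Qz z := fun z y =>
    (single_le_sum (f := m z) (fun y' _ => sum_nonneg fun x _ => mul_nonneg (hQ0 x z) (hW0 x y'))
      (mem_univ y)).trans_eq (sum_sum_mul_of_sum_eq_one _ hW1)
  have hterm : ∀ x z y, Q x z * W x y * log (W x y / q y) -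
      Q x z * W x y * log (W x y * Qz z / m z y) = Q x z * W x y * log (m z y / (Qz z * q y)) := by
    intro x z y
    rcases (mul_nonneg (hQ0 x z) (hW0 x y)).eq_or_lt with h | h
    · simp [← h]
    have hm := h.trans_le (mul_le_sum_mul (fun x' => hQ0 x' z) hW0 x y)
    rw [← mul_sub, log_div_sub_log_mul_div (pos_of_mul_pos_right h (hQ0 x z))
      (hm.trans_le (hm_le_q z y)) (hm.trans_le (hm_le_Qz z y)) hm]
  have hMI : mutualInfo QX W = ∑ x, ∑ z, ∑ y, Q x z * W x y * log (W x y / q y) :=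
    sum_congr rfl fun x _ => by
      rw [sum_comm]; exact sum_congr rfl fun y _ => by rw [← sum_mul, ← sum_mul]
  have hdiff : mutualInfo QX W - condMutualInfo Q (fun x _ y => W x y) =
      ∑ z, ∑ y, m z y * log (m z y / (Qz z * q y)) :=
    calc mutualInfo QX W - condMutualInfo Q (fun x _ y => W x y)
        = ∑ x, ∑ z, ∑ y, (Q x z * W x y * log (W x y / q y) -
            Q x z * W x y * log (W x y * Qz z / m z y)) := by
          rw [hMI, condMutualInfo]
          simp only [← sum_sub_distrib]
          rfl
      _ = ∑ z, ∑ y, m z y * log (m z y / (Qz z * q y)) := by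
          simp only [hterm, m, sum_mul]
          rw [sum_comm]
          exact sum_congr rfl fun z _ => sum_comm
  have hq1 : ∑ y, q y = 1 := by rw [sum_sum_mul_of_sum_eq_one QX hW1]; exact hQ1
  have hI : 0 ≤ ∑ z, ∑ y, m z y * log (m z y / (Qz z * q y)) :=
    sum_nonneg fun z _ => univ.sum_mul_log_div_nonneg
      (fun y _ => sum_nonneg fun x _ => mul_nonneg (hQ0 x z) (hW0 x y))
      (fun y _ => mul_nonneg (sum_nonneg fun x _ => hQ0 x z) (sum_nonneg fun x _ =>
        mul_nonneg (hQX0 x) (hW0 x y)))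
      (fun y _ hy => mul_pos (hy.trans_le (hm_le_Qz z y)) (hy.trans_le (hm_le_q z y)))
      (by rw [← mul_sum, hq1, mul_one, sum_sum_mul_of_sum_eq_one _ hW1])
  linarith

end Channels

section RateDistortion

variable {X Z Y : Type*} [Fintype X] [Fintype Z] [Fintype Y] {d : X → Y → ℝ} {D : ℝ}

lemma exists_channel_distortion_eq_zero (hzero : ∀ x, ∃ y, d x y = 0) :
    ∃ W : X → Y → ℝ, (∀ x y, 0 ≤ W x y) ∧ (∀ x, ∑ y, W x y = 1) ∧
      ∀ Q : X → ℝ, ∑ x, ∑ y, Q x * W x y * d x y = 0 := by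
  classical
  choose f hf using hzero
  refine ⟨fun x y => if y = f x then 1 else 0, fun x y => by positivity, fun x => by simp,
    fun Q => ?_⟩
  simp [hf]

lemma rateDistortion_le_mutualInfo {Q : X → ℝ} {W : X → Y → ℝ} (hQ : IsProbDist Q)
    (hW0 : ∀ x y, 0 ≤ W x y) (hW1 : ∀ x, ∑ y, W x y = 1)
    (hWd : ∑ x, ∑ y, Q x * W x y * d x y ≤ D) : rateDistortion d D Q ≤ mutualInfo Q W :=
  csInf_le ⟨0, by rintro _ ⟨W', h0, h1, -, rfl⟩; exact mutualInfo_nonneg hQ h0 h1⟩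
    ⟨W, hW0, hW1, hWd, rfl⟩

lemma condRateDistortion_le_condMutualInfo {Q : X → Z → ℝ} {W : X → Z → Y → ℝ}
    (hQ0 : ∀ x z, 0 ≤ Q x z) (hW0 : ∀ x z y, 0 ≤ W x z y) (hW1 : ∀ x z, ∑ y, W x z y = 1)
    (hWd : ∑ x, ∑ z, ∑ y, Q x z * W x z y * d x y ≤ D) :
    condRateDistortion d D Q ≤ condMutualInfo Q W :=
  csInf_le ⟨0, by rintro _ ⟨W', h0, h1, -, rfl⟩; exact condMutualInfo_nonneg hQ0 h0 h1⟩
    ⟨W, hW0, hW1, hWd, rfl⟩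

lemma rateDistortion_le_card (hzero : ∀ x, ∃ y, d x y = 0) (hD : 0 ≤ D) {Q : X → ℝ}
    (hQ : IsProbDist Q) : rateDistortion d D Q ≤ Fintype.card X := by
  obtain ⟨W, hW0, hW1, hWd⟩ := exists_channel_distortion_eq_zero hzero
  calc rateDistortion d D Q ≤ mutualInfo Q W :=
        rateDistortion_le_mutualInfo hQ hW0 hW1 ((hWd Q).trans_le hD)
    _ ≤ ∑ x, negMulLog (Q x) := mutualInfo_le_sum_negMulLog hQ.1 hW0 hW1
    _ ≤ ∑ _x : X, (1 : ℝ) := sum_le_sum fun x _ =>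
        (negMulLog_le_one_sub_self (hQ.1 x)).trans (by linarith [hQ.1 x])
    _ = Fintype.card X := by simp

theorem condRateDistortion_le_rateDistortion_marginal (hzero : ∀ x, ∃ y, d x y = 0)
    (hD : 0 ≤ D) {Q : X → Z → ℝ} (hQ : IsJointProbDist Q) :
    condRateDistortion d D Q ≤ rateDistortion d D (fun a => ∑ b, Q a b) := by
  obtain ⟨W₀, hW₀0, hW₀1, hW₀d⟩ := exists_channel_distortion_eq_zero hzero
  refine le_csInf ⟨_, W₀, hW₀0, hW₀1, (hW₀d _).trans_le hD, rfl⟩ ?_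
  rintro _ ⟨W, hW0, hW1, hWd, rfl⟩
  have hWd' : ∑ x, ∑ z, ∑ y, Q x z * W x y * d x y ≤ D := by
    simp only [sum_mul] at hWd
    exact (sum_congr rfl fun x _ => sum_comm).trans_le hWd
  calc condRateDistortion d D Q ≤ condMutualInfo Q (fun x _ y => W x y) :=
        condRateDistortion_le_condMutualInfo hQ.1 (fun x _ y => hW0 x y) (fun x _ => hW1 x) hWd'
    _ ≤ mutualInfo (fun a => ∑ b, Q a b) W := condMutualInfo_le_mutualInfo_marginal hQ hW0 hW1

end RateDistortion

theorem stmt18_general {X Z Y : Type*} [Fintype X] [Fintype Z] [Fintype Y]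
    [Nonempty Z]
    (d : X → Y → ℝ)
    (hzero : ∀ x, ∃ y, d x y = 0)
    (D : ℝ) (hD : 0 ≤ D)
    (P : X → Z → ℝ) (hP : IsJointProbDist P) (hfull : ∀ a b, 0 < P a b) :
    sSup {r | ∃ Q : X → Z → ℝ, IsJointProbDist Q ∧
        r = condRateDistortion d (Y := Y) D Q - klDiv2 Q P}
      ≤ sSup {r | ∃ Q : X → ℝ, IsProbDist Q ∧
          r = rateDistortion d (Y := Y) D Q - klDiv Q (fun a => ∑ b, P a b)} := by
  have hPX : ∀ a, 0 < ∑ b, P a b := fun a => sum_pos (fun b _ => hfull a b) univ_nonempty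
  refine csSup_le ⟨_, P, hP, rfl⟩ ?_
  rintro _ ⟨Q, hQ, rfl⟩
  refine le_csSup_of_le ?_ ⟨_, hQ.marginal, rfl⟩ (sub_le_sub
    (condRateDistortion_le_rateDistortion_marginal hzero hD hQ)
    (klDiv_marginal_le_klDiv2 hQ.1 hfull))
  refine ⟨Fintype.card X, ?_⟩
  rintro _ ⟨Q', hQ', rfl⟩
  linarith [rateDistortion_le_card hzero hD hQ' (Y := Y),
    klDiv_nonneg hQ' hP.marginal fun a _ => hPX a]

theorem stmt18 {X Z Y : Type*} [Fintype X] [Fintype Z] [Fintype Y]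
    [Nonempty X] [Nonempty Z] [Nonempty Y]
    (d : X → Y → ℝ) (hd : ∀ x y, 0 ≤ d x y)
    (hzero : ∀ x, ∃ y, d x y = 0)
    (D : ℝ) (hD : 0 ≤ D)
    (P : X → Z → ℝ) (hP : IsJointProbDist P) (hfull : ∀ a b, 0 < P a b) :
    sSup {r | ∃ Q : X → Z → ℝ, IsJointProbDist Q ∧
        r = condRateDistortion d (Y := Y) D Q - klDiv2 Q P}
      ≤ sSup {r | ∃ Q : X → ℝ, IsProbDist Q ∧
          r = rateDistortion d (Y := Y) D Q - klDiv Q (fun a => ∑ b, P a b)} :=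
  stmt18_general d hzero D hD P hP hfull
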